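/- arXiv:1209.3828 — 4 statements merged into one kernel-verified Lean document; each statement's English description precedes it below -/
import Mathlib

section
/- Let p be an odd prime, n, t, r positive integers, q = p^n with q ≡ 3 (mod 4). If gcd(r, q-1)=1 and gcd(t+r, q-1)=2, then f(x) = (1 - x^t)·x^{(q-1)/2 + r} - x^r - x^{t+r} is a permutation polynomial of F_q. -/
/-!
Put `e = (q - 1) / 2`, which is odd since `q ≡ 3 (mod 4)`, so that `x ^ e = ±1` on `F^×`
(Euler's criterion). On squares `f x = -2 x ^ (t + r)` and on non-squares `f x = -2 x ^ r`; as `r`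
is odd, `f x ^ e = (-2) ^ e x ^ e` in both cases, so `f` maps squares to one class and non-squares
to the other and it suffices that `f` is injective on each class. On non-squares, `x ^ r = y ^ r`
forces `x = y` because `gcd(r, q - 1) = 1`. On squares, `x ^ (t + r) = y ^ (t + r)` forces
`x ^ 2 = y ^ 2` because `gcd(t + r, q - 1) = 2`, and together with `x ^ e = y ^ e = 1` for odd `e`
this gives `x = y`.
-/

lemma pow_gcd_eq_pow_gcd {G₀ : Type*} [CommGroupWithZero G₀] {x y : G₀} (hy : y ≠ 0) {m n : ℕ}
    (hm : x ^ m = y ^ m) (hn : x ^ n = y ^ n) : x ^ m.gcd n = y ^ m.gcd n := by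
  have key : ∀ k, x ^ k = y ^ k ↔ (x / y) ^ k = 1 := fun k => by
    rw [div_pow, div_eq_one_iff_eq (pow_ne_zero k hy)]
  rw [key] at hm hn ⊢
  exact pow_gcd_eq_one.mpr ⟨hm, hn⟩

namespace FiniteField

variable {F : Type*} [Field F] [Fintype F]

lemma pow_gcd_card_sub_one_eq_of_pow_eq {x y : F} (hx : x ≠ 0) (hy : y ≠ 0) {k : ℕ}
    (h : x ^ k = y ^ k) :
    x ^ k.gcd (Fintype.card F - 1) = y ^ k.gcd (Fintype.card F - 1) :=
  pow_gcd_eq_pow_gcd hy h (by rw [pow_card_sub_one_eq_one x hx, pow_card_sub_one_eq_one y hy])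

lemma ringChar_ne_two_of_card_mod_four (hq : Fintype.card F % 4 = 3) : ringChar F ≠ 2 :=
  fun h => by have := even_card_of_char_two h; omega

end FiniteField

def permPoly {F : Type*} [Field F] (t r e : ℕ) (x : F) : F :=
  (1 - x ^ t) * x ^ (e + r) - x ^ r - x ^ (t + r)

section

variable {F : Type*} [Field F] (t : ℕ) {r e : ℕ} {x : F}

lemma permPoly_of_pow_eq_one (hx : x ^ e = 1) : permPoly t r e x = -2 * x ^ (t + r) := by
  rw [permPoly, pow_add x e, hx, pow_add x t]
  ring

lemma permPoly_of_pow_eq_neg_one (hx : x ^ e = -1) : permPoly t r e x = -2 * x ^ r := by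
  rw [permPoly, pow_add x e, hx, pow_add x t]
  ring

lemma permPoly_zero (hr : r ≠ 0) : permPoly t r e (0 : F) = 0 := by
  simp [permPoly, hr]

end

section

open FiniteField

variable {F : Type*} [Field F] [Fintype F] {r : ℕ}

lemma permPoly_pow_half_card (t : ℕ) (hF : ringChar F ≠ 2) (hr : Odd r) (x : F) :
    permPoly t r (Fintype.card F / 2) x ^ (Fintype.card F / 2) =
      (-2) ^ (Fintype.card F / 2) * x ^ (Fintype.card F / 2) := by
  set e := Fintype.card F / 2
  have he : e ≠ 0 := by
    have := odd_card_of_char_ne_two hF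
    have := Fintype.one_lt_card (α := F)
    omega
  rcases eq_or_ne x 0 with rfl | hx
  · rw [permPoly_zero t hr.pos.ne', zero_pow he, mul_zero]
  rcases pow_dichotomy hF hx with hxe | hxe
  · rw [permPoly_of_pow_eq_one t hxe, mul_pow, pow_right_comm, hxe, one_pow]
  · rw [permPoly_of_pow_eq_neg_one t hxe, mul_pow, pow_right_comm, hxe, hr.neg_one_pow]

theorem permPoly_injective {t : ℕ} (hq : Fintype.card F % 4 = 3)
    (hr : r.gcd (Fintype.card F - 1) = 1) (htr : (t + r).gcd (Fintype.card F - 1) = 2) :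
    Function.Injective (permPoly (F := F) t r ((Fintype.card F - 1) / 2)) := by
  have hF := ringChar_ne_two_of_card_mod_four hq
  have hm2 : (-2 : F) ≠ 0 := neg_ne_zero.mpr (Ring.two_ne_zero hF)
  rw [show (Fintype.card F - 1) / 2 = Fintype.card F / 2 by omega]
  set e := Fintype.card F / 2 with he
  have he_odd : Odd e := Nat.odd_iff.mpr (by omega)
  have hr_odd : Odd r := by
    by_contra h
    have : 2 ∣ r.gcd (Fintype.card F - 1) :=
      Nat.dvd_gcd (Nat.not_odd_iff_even.mp h).two_dvd (by omega)
    omega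
  intro x y hxy
  have hxye : x ^ e = y ^ e := by
    have := permPoly_pow_half_card t hF hr_odd x
    rw [hxy, permPoly_pow_half_card t hF hr_odd y] at this
    exact (mul_left_cancel₀ (pow_ne_zero e hm2) this).symm
  have eq_zero_of_pow_eq {a b : F} (hab : a ^ e = b ^ e) (hb : b = 0) : a = 0 :=
    (pow_eq_zero_iff he_odd.pos.ne').mp (by rw [hab, hb, zero_pow he_odd.pos.ne'])
  rcases eq_or_ne y 0 with hy | hy
  · rw [hy, eq_zero_of_pow_eq hxye hy]
  have hx : x ≠ 0 := fun hx => hy (eq_zero_of_pow_eq hxye.symm hx)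
  rcases pow_dichotomy hF hy with hye | hye
  · rw [permPoly_of_pow_eq_one t (hxye.trans hye), permPoly_of_pow_eq_one t hye] at hxy
    have hsq : x ^ 2 = y ^ 2 :=
      htr ▸ pow_gcd_card_sub_one_eq_of_pow_eq hx hy (mul_left_cancel₀ hm2 hxy)
    simpa [Nat.coprime_two_left.mpr he_odd] using pow_gcd_eq_pow_gcd hy hsq hxye
  · rw [permPoly_of_pow_eq_neg_one t (hxye.trans hye), permPoly_of_pow_eq_neg_one t hye] at hxy
    simpa [hr] using pow_gcd_card_sub_one_eq_of_pow_eq hx hy (mul_left_cancel₀ hm2 hxy)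

end

theorem stmt_5_general {F : Type*} [Field F] [Fintype F] (t r q : ℕ)
    (hcard : Fintype.card F = q) (hq4 : q % 4 = 3)
    (h1 : Nat.gcd r (q - 1) = 1) (h2 : Nat.gcd (t + r) (q - 1) = 2) :
    Function.Bijective
      (fun x : F => (1 - x ^ t) * x ^ ((q - 1) / 2 + r) - x ^ r - x ^ (t + r)) := by
  subst hcard
  exact Finite.injective_iff_bijective.mp (permPoly_injective hq4 h1 h2)

theorem stmt_5 {F : Type*} [Field F] [Fintype F] (p n t r q : ℕ)
    (hp : p.Prime) (hpodd : Odd p) (hn : 0 < n) (ht : 0 < t) (hr : 0 < r)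
    (hq : q = p ^ n) (hcard : Fintype.card F = q) (hq4 : q % 4 = 3)
    (h1 : Nat.gcd r (q - 1) = 1) (h2 : Nat.gcd (t + r) (q - 1) = 2) :
    Function.Bijective
      (fun x : F => (1 - x ^ t) * x ^ ((q - 1) / 2 + r) - x ^ r - x ^ (t + r)) :=
  stmt_5_general t r q hcard hq4 h1 h2
end

section
/- Let q = 3^n, t a positive integer, α, β, θ ∈ F_q*, and let C_0 (resp. C_1) be the nonzero squares (resp. nonsquares) of F_q. Define f(0)=0, f(x)=β·(x^3 + θx^2 + θ^2 x) for x ∈ C_0, and f(x)=α·x^t for x ∈ C_1. Then f is a bijection of F_q if and only if gcd(t, (q-1)/2)=1, η(θ)=-1, and either (t odd and η(α)=η(β)) or (t even and η(α)=-η(β)). -/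
/-!
In characteristic 3 we have `x ^ 3 + θ x ^ 2 + θ ^ 2 x = x (x - θ) ^ 2`. Unless `θ` is a
nonsquare, `f θ = 0 = f 0`; if it is, `f` multiplies the quadratic character by `η(β)` on the
nonzero squares and by `η(α) (-1) ^ t` on the nonsquares, so `f` is bijective iff these two values
differ and `f` is injective on each of the two classes. On squares `x = a ^ 2` we get
`x (x - θ) ^ 2 = (a ^ 3 - θ a) ^ 2`, and `a ↦ a ^ 3 - θ a` is additive in characteristic 3 with
kernel `{0}` exactly when `θ` is a nonsquare. On nonsquares, `x ^ t = y ^ t` makes `x / y` a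
square `t`-th root of unity, and the squares form the cyclic group of order `(q - 1) / 2`.
-/

open scoped Classical in
/-- The quadratic character: 0 at 0, 1 at nonzero squares, -1 at nonsquares. -/
noncomputable def quadChar {F : Type*} [Field F] (a : F) : ℤ :=
  if a = 0 then 0 else if IsSquare a then 1 else -1

open Function

theorem quadChar_eq_quadraticChar {F : Type*} [Field F] [Fintype F] [DecidableEq F] (a : F) :
    quadChar a = quadraticChar F a := by
  simp only [quadChar, quadraticChar_apply, quadraticCharFun]
  congr

theorem IsCyclic.exists_orderOf_sq_eq {G : Type*} [Group G] [Finite G] [IsCyclic G] {d m : ℕ}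
    (hG : Nat.card G = 2 * m) (hd : d ∣ m) : ∃ c : G, orderOf (c ^ 2) = d := by
  obtain ⟨g, hg⟩ := IsCyclic.exists_ofOrder_eq_natCard (α := G)
  refine ⟨g ^ (m / d), ?_⟩
  rw [← pow_mul, mul_comm, ← Nat.mul_div_assoc _ hd, ← hG, ← hg]
  exact orderOf_pow_orderOf_div (hg ▸ Nat.card_pos.ne') (hg ▸ hG ▸ hd.mul_left 2)

theorem mul_neg_one_pow_ne_iff {a b : ℤ} (ha : a = 1 ∨ a = -1) (hb : b = 1 ∨ b = -1)
    (t : ℕ) : a * (-1) ^ t ≠ b ↔ (Odd t ∧ a = b) ∨ (Even t ∧ a = -b) := by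
  rcases Nat.even_or_odd t with ht | ht <;>
    rcases ha with rfl | rfl <;> rcases hb with rfl | rfl <;>
    simp [ht, ht.neg_one_pow, Nat.not_odd_iff_even, Nat.not_even_iff_odd]

section CharThree

variable {F : Type*} [Field F] [CharP F 3]

theorem pow_three_add_mul_sq_add_sq_mul (θ x : F) :
    x ^ 3 + θ * x ^ 2 + θ ^ 2 * x = x * (x - θ) ^ 2 := by
  linear_combination θ * x ^ 2 * CharP.cast_eq_zero F 3

theorem injective_pow_three_sub_mul {θ : F} (hθ : ¬IsSquare θ) :
    Injective fun a : F => a ^ 3 - θ * a := by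
  intro a b hab
  have hfac : (a - b) * ((a - b) ^ 2 - θ) = 0 := by
    simp only at hab
    linear_combination hab + a * b * (b - a) * CharP.cast_eq_zero F 3
  rcases mul_eq_zero.mp hfac with h | h
  · exact sub_eq_zero.mp h
  · exact absurd ⟨a - b, by linear_combination -h⟩ hθ

theorem injOn_mul_sub_sq {θ : F} (hθ : ¬IsSquare θ) :
    Set.InjOn (fun x : F => x * (x - θ) ^ 2) {x | IsSquare x} := by
  rintro _ ⟨a, rfl⟩ _ ⟨b, rfl⟩ hab
  have hsq : (a ^ 3 - θ * a) ^ 2 = (b ^ 3 - θ * b) ^ 2 := by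
    simp only at hab
    linear_combination hab
  rcases sq_eq_sq_iff_eq_or_eq_neg.mp hsq with h | h
  · rw [injective_pow_three_sub_mul hθ h]
  · have : a = -b := injective_pow_three_sub_mul hθ (by simp only; linear_combination h)
    rw [this, neg_mul_neg]

end CharThree

section OddChar

variable {F : Type*} [Field F] [Fintype F] [DecidableEq F]

theorem injOn_pow_nonsquares_iff (hF : ringChar F ≠ 2) (t : ℕ) :
    Set.InjOn (fun x : F => x ^ t) {x | ¬IsSquare x} ↔
      Nat.gcd t ((Fintype.card F - 1) / 2) = 1 := by
  have hcard : 2 * ((Fintype.card F - 1) / 2) = Fintype.card F - 1 := by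
    have := FiniteField.odd_card_of_char_ne_two hF
    omega
  constructor
  · intro hinj
    by_contra hd
    obtain ⟨c, hc⟩ := IsCyclic.exists_orderOf_sq_eq (G := Fˣ)
      (by rw [Nat.card_eq_fintype_card, Fintype.card_units, hcard])
      (Nat.gcd_dvd_right t ((Fintype.card F - 1) / 2))
    obtain ⟨y, hy⟩ := FiniteField.exists_nonsquare hF
    have hy0 : y ≠ 0 := fun h => hy (h ▸ .zero)
    have hct : ((c : F) ^ 2) ^ t = 1 := by
      have := congrArg Units.val (orderOf_dvd_iff_pow_eq_one.mp (hc ▸ Nat.gcd_dvd_left t _))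
      push_cast at this
      exact this
    have hcy : ¬IsSquare ((c : F) ^ 2 * y) := by
      rw [← quadraticChar_neg_one_iff_not_isSquare, map_mul, quadraticChar_sq_one' c.ne_zero,
        quadraticChar_neg_one_iff_not_isSquare.mpr hy, one_mul]
    have hc1 : (c : F) ^ 2 = 1 :=
      mul_eq_right₀ hy0 |>.mp <| hinj hcy hy (by simp only [mul_pow, hct, one_mul])
    apply hd
    rw [← hc, orderOf_eq_one_iff]
    exact Units.ext (by push_cast; exact hc1)
  · intro hgcd x hx y hy hxy
    have hy0 : y ≠ 0 := fun h => hy (h ▸ .zero)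
    have hquot0 : x / y ≠ 0 := div_ne_zero (fun h => hx (h ▸ .zero)) hy0
    have hquot : quadraticChar F (x / y) = 1 := by
      have := map_mul (quadraticChar F) (x / y) y
      rw [div_mul_cancel₀ x hy0, quadraticChar_neg_one_iff_not_isSquare.mpr hx,
        quadraticChar_neg_one_iff_not_isSquare.mpr hy] at this
      omega
    obtain ⟨c, hc⟩ := (quadraticChar_one_iff_isSquare hquot0).mp hquot
    have ht : (x / y) ^ t = 1 := by
      simp only at hxy
      rw [div_pow, hxy, div_self (pow_ne_zero t hy0)]
    have hm : (x / y) ^ ((Fintype.card F - 1) / 2) = 1 := by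
      rw [hc, ← sq, ← pow_mul, hcard]
      exact FiniteField.pow_card_sub_one_eq_one c fun h => hquot0 (by rw [hc, h, zero_mul])
    have := pow_gcd_eq_one.mpr ⟨ht, hm⟩
    rwa [hgcd, pow_one, div_eq_one_iff_eq hy0] at this

theorem bijective_iff_of_quadraticChar_eq (hF : ringChar F ≠ 2) {f : F → F} (hf0 : f 0 = 0)
    {b c : ℤ} (hb : b ≠ 0) (hc : c ≠ 0)
    (hsq : ∀ x, x ≠ 0 → IsSquare x → quadraticChar F (f x) = b)
    (hns : ∀ x, ¬IsSquare x → quadraticChar F (f x) = c) :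
    Bijective f ↔
      Set.InjOn f {x | x ≠ 0 ∧ IsSquare x} ∧ Set.InjOn f {x | ¬IsSquare x} ∧ b ≠ c := by
  have hclass (x : F) :
      quadraticChar F (f x) = if x = 0 then 0 else if IsSquare x then b else c := by
    split_ifs with h0 hs
    · rw [h0, hf0, quadraticChar_zero]
    · exact hsq x h0 hs
    · exact hns x hs
  constructor
  · intro hbij
    refine ⟨hbij.injective.injOn, hbij.injective.injOn, fun hbc => ?_⟩
    obtain ⟨z, hz0, hzb⟩ : ∃ z : F, z ≠ 0 ∧ quadraticChar F z ≠ b := by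
      have hb1 := hsq 1 one_ne_zero IsSquare.one
      rcases quadraticChar_dichotomy (F := F) (a := f 1)
        (fun h => hb (by rw [← hb1, h, quadraticChar_zero])) with h | h
      · obtain ⟨z, hz⟩ := FiniteField.exists_nonsquare hF
        refine ⟨z, fun h0 => hz (h0 ▸ IsSquare.zero), ?_⟩
        rw [quadraticChar_neg_one_iff_not_isSquare.mpr hz]
        omega
      · exact ⟨1, one_ne_zero, by rw [map_one]; omega⟩
    obtain ⟨x, rfl⟩ := hbij.surjective z
    refine hzb ?_
    rw [hclass]
    split_ifs with h0 hs
    · exact absurd (h0 ▸ hf0) hz0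
    · rfl
    · exact hbc.symm
  · rintro ⟨hinjS, hinjN, hbc⟩
    refine Finite.injective_iff_bijective.mp fun x y hxy => ?_
    have hxy' := hclass x
    rw [hxy, hclass y] at hxy'
    split_ifs at hxy'
    all_goals first
      | exact hinjS ⟨‹x ≠ 0›, ‹IsSquare x›⟩ ⟨‹y ≠ 0›, ‹IsSquare y›⟩ hxy
      | exact hinjN ‹¬IsSquare x› ‹¬IsSquare y› hxy
      | exact ‹x = 0›.trans ‹y = 0›.symm
      | omega

end OddChar

theorem stmt_11_general {F : Type*} [Field F] [Fintype F] (n t q : ℕ)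
    (hq : q = 3 ^ n) (hcard : Fintype.card F = q)
    (α β θ : F) (hα : α ≠ 0) (hβ : β ≠ 0) (hθ : θ ≠ 0)
    (f : F → F) (hf0 : f 0 = 0)
    (hfsq : ∀ x : F, x ≠ 0 → IsSquare x → f x = β * (x ^ 3 + θ * x ^ 2 + θ ^ 2 * x))
    (hfns : ∀ x : F, ¬ IsSquare x → f x = α * x ^ t) :
    Function.Bijective f ↔
      Nat.gcd t ((q - 1) / 2) = 1 ∧ quadChar θ = -1 ∧
        ((Odd t ∧ quadChar α = quadChar β) ∨ (Even t ∧ quadChar α = -quadChar β)) := by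
  classical
  have : Fact (Nat.Prime 3) := ⟨Nat.prime_three⟩
  have : CharP F 3 := charP_of_card_eq_prime_pow (hcard.trans hq)
  have hF : ringChar F ≠ 2 := by rw [ringChar.eq F 3]; decide
  simp only [pow_three_add_mul_sq_add_sq_mul] at hfsq
  simp only [quadChar_eq_quadraticChar, quadraticChar_neg_one_iff_not_isSquare, ← hcard]
  by_cases hθsq : IsSquare θ
  · refine iff_of_false (fun hbij => hθ (hbij.injective ?_)) (by tauto)
    rw [hfsq θ hθ hθsq, hf0, sub_self]
    ring
  have hsq (x : F) (hx : x ≠ 0) (hxsq : IsSquare x) :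
      quadraticChar F (f x) = quadraticChar F β := by
    rw [hfsq x hx hxsq, map_mul, map_mul, (quadraticChar_one_iff_isSquare hx).mpr hxsq,
      quadraticChar_sq_one' (sub_ne_zero.mpr fun h : x = θ => hθsq (h ▸ hxsq)), mul_one,
      mul_one]
  have hns (x : F) (hx : ¬IsSquare x) :
      quadraticChar F (f x) = quadraticChar F α * (-1) ^ t := by
    rw [hfns x hx, map_mul, map_pow, quadraticChar_neg_one_iff_not_isSquare.mpr hx]
  rw [bijective_iff_of_quadraticChar_eq hF hf0 ((quadraticChar_eq_zero_iff).not.mpr hβ)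
    (mul_ne_zero ((quadraticChar_eq_zero_iff).not.mpr hα) (by simp)) hsq hns, ne_comm,
    mul_neg_one_pow_ne_iff (quadraticChar_dichotomy hα) (quadraticChar_dichotomy hβ)]
  have hinjS : Set.InjOn f {x | x ≠ 0 ∧ IsSquare x} := fun x hx y hy hxy =>
    injOn_mul_sub_sq hθsq hx.2 hy.2
      (mul_left_cancel₀ hβ (by rwa [hfsq x hx.1 hx.2, hfsq y hy.1 hy.2] at hxy))
  have hinjN :
      Set.InjOn f {x | ¬IsSquare x} ↔ Set.InjOn (fun x : F => x ^ t) {x | ¬IsSquare x} := by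
    rw [Set.EqOn.injOn_iff (s := {x | ¬IsSquare x}) fun x hx => hfns x hx]
    exact ⟨Set.InjOn.of_comp, (mul_right_injective₀ hα).comp_injOn⟩
  rw [hinjN, injOn_pow_nonsquares_iff hF]
  tauto

theorem stmt_11 {F : Type*} [Field F] [Fintype F] (n t q : ℕ)
    (hn : 0 < n) (ht : 0 < t) (hq : q = 3 ^ n) (hcard : Fintype.card F = q)
    (α β θ : F) (hα : α ≠ 0) (hβ : β ≠ 0) (hθ : θ ≠ 0)
    (f : F → F) (hf0 : f 0 = 0)
    (hfsq : ∀ x : F, x ≠ 0 → IsSquare x → f x = β * (x ^ 3 + θ * x ^ 2 + θ ^ 2 * x))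
    (hfns : ∀ x : F, ¬ IsSquare x → f x = α * x ^ t) :
    Function.Bijective f ↔
      Nat.gcd t ((q - 1) / 2) = 1 ∧ quadChar θ = -1 ∧
        ((Odd t ∧ quadChar α = quadChar β) ∨ (Even t ∧ quadChar α = -quadChar β)) :=
  stmt_11_general n t q hq hcard α β θ hα hβ hθ f hf0 hfsq hfns
end

section
/- For any odd positive integer n, the polynomial f(x) = x^{(3^n-1)/2 + 3} + x^{(3^n-1)/2 + 1} + x^3 + x^2 + x is a permutation polynomial of F_{3^n}. -/
/-!
Write `χ` for the quadratic character of `F = 𝔽_q`, `q = 3ⁿ`, so that `x ^ ((q - 1) / 2) = χ x`.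
Then `f x = χ x * (x³ + x) + x³ + x² + x`: on a nonsquare `f x = x²`, and on a nonzero square
`f (a²) = -(a³ + a)²` in characteristic `3`. Since `n` is odd, `q ≡ 3 (mod 4)` and `-1` is a
nonsquare, so `f` swaps the nonzero squares and the nonsquares: `χ (f x) = -χ x`. On the
nonsquares `x ↦ x²` is injective because `-x` is a square, and on the squares injectivity reduces
to that of the additive map `a ↦ a³ + a`, whose kernel is trivial since `a² = -1` has no solution.
-/

open Function

theorem ringChar_ne_two_of_charP_three {R : Type*} [NonAssocSemiring R] [CharP R 3] :
    ringChar R ≠ 2 := by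
  rw [ringChar.eq R 3]
  norm_num

section CubeAddSelf

variable {R : Type*} [CommRing R] [IsDomain R] [CharP R 3]

theorem cube_add_self_injective (h : ¬IsSquare (-1 : R)) : Injective fun a : R => a ^ 3 + a := by
  intro a b hab
  have hfac : (a - b) * ((a - b) ^ 2 + 1) = 0 := by
    have h3 : (3 : R) = 0 := by exact_mod_cast CharP.cast_eq_zero R 3
    linear_combination (hab : a ^ 3 + a = b ^ 3 + b) + (a * b ^ 2 - a ^ 2 * b) * h3
  rcases mul_eq_zero.mp hfac with hab | hab
  · exact sub_eq_zero.mp hab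
  · exact absurd ⟨a - b, by linear_combination -hab⟩ h

theorem sq_eq_sq_of_sq_cube_add_self_eq (h : ¬IsSquare (-1 : R)) {a b : R}
    (hab : (a ^ 3 + a) ^ 2 = (b ^ 3 + b) ^ 2) : a ^ 2 = b ^ 2 := by
  rcases sq_eq_sq_iff_eq_or_eq_neg.mp hab with hab | hab
  · rw [cube_add_self_injective h hab]
  · have : a = -b := cube_add_self_injective h (by linear_combination hab)
    rw [this, neg_sq]

end CubeAddSelf

namespace FiniteField

variable (F : Type*) [Field F] [Fintype F]

-- For odd `q = card F`, the exponent `q / 2` is `(q - 1) / 2`.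
def permFun (x : F) : F :=
  x ^ (Fintype.card F / 2 + 3) + x ^ (Fintype.card F / 2 + 1) + x ^ 3 + x ^ 2 + x

variable {F}

theorem permFun_zero : permFun F 0 = 0 := by
  simp [permFun]

variable [DecidableEq F]

theorem eq_of_sq_eq_of_quadraticChar_eq (hF : ¬IsSquare (-1 : F)) {x y : F} (hx : x ≠ 0)
    (hsq : x ^ 2 = y ^ 2) (hχ : quadraticChar F x = quadraticChar F y) : x = y := by
  rcases sq_eq_sq_iff_eq_or_eq_neg.mp hsq with h | rfl
  · exact h
  rw [neg_eq_neg_one_mul, map_mul, quadraticChar_neg_one_iff_not_isSquare.mpr hF, neg_one_mul]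
    at hχ
  have hy : y = 0 := quadraticChar_eq_zero_iff.mp (by omega)
  simp [hy] at hx

theorem permFun_eq (hF : ringChar F ≠ 2) (x : F) :
    permFun F x = quadraticChar F x * (x ^ 3 + x) + x ^ 3 + x ^ 2 + x := by
  rw [permFun, quadraticChar_eq_pow_of_char_ne_two' hF, pow_add, pow_add]
  ring

theorem permFun_of_not_isSquare (hF : ringChar F ≠ 2) {x : F} (hx : ¬IsSquare x) :
    permFun F x = x ^ 2 := by
  rw [permFun_eq hF, quadraticChar_neg_one_iff_not_isSquare.mpr hx]
  push_cast
  ring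

theorem permFun_sq [CharP F 3] {a : F} (ha : a ≠ 0) : permFun F (a ^ 2) = -(a ^ 3 + a) ^ 2 := by
  have h3 : (3 : F) = 0 := by exact_mod_cast CharP.cast_eq_zero F 3
  rw [permFun_eq ringChar_ne_two_of_charP_three, quadraticChar_sq_one' ha]
  push_cast
  linear_combination (a ^ 6 + a ^ 4 + a ^ 2) * h3

variable [CharP F 3] (hF : ¬IsSquare (-1 : F))
include hF

theorem quadraticChar_permFun (x : F) : quadraticChar F (permFun F x) = -quadraticChar F x := by
  by_cases hx0 : x = 0
  · simp [hx0, permFun_zero]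
  by_cases hx : IsSquare x
  · obtain ⟨a, rfl⟩ := hx
    have ha : a ≠ 0 := by rintro rfl; simp at hx0
    have hga : a ^ 3 + a ≠ 0 := fun h =>
      ha (cube_add_self_injective hF (by simpa using h))
    rw [← sq, permFun_sq ha, neg_eq_neg_one_mul, map_mul, quadraticChar_sq_one' hga,
      quadraticChar_sq_one' ha, quadraticChar_neg_one_iff_not_isSquare.mpr hF, mul_one]
  · rw [permFun_of_not_isSquare ringChar_ne_two_of_charP_three hx, quadraticChar_sq_one' hx0,
      quadraticChar_neg_one_iff_not_isSquare.mpr hx, neg_neg]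

theorem permFun_injective : Injective (permFun F) := by
  intro x y hxy
  have hχ : quadraticChar F x = quadraticChar F y := by
    simpa [quadraticChar_permFun hF] using congrArg (quadraticChar F) hxy
  by_cases hx0 : x = 0
  · rw [hx0, quadraticChar_zero, eq_comm, quadraticChar_eq_zero_iff] at hχ
    rw [hx0, hχ]
  have hy0 : y ≠ 0 := by rwa [Ne, ← quadraticChar_eq_zero_iff, ← hχ, quadraticChar_eq_zero_iff]
  by_cases hx : IsSquare x
  · have hy : IsSquare y := by
      rwa [← quadraticChar_one_iff_isSquare hy0, ← hχ, quadraticChar_one_iff_isSquare hx0]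
    obtain ⟨a, rfl⟩ := hx
    obtain ⟨b, rfl⟩ := hy
    rw [← sq, ← sq] at hxy ⊢
    rw [permFun_sq (by rintro rfl; simp at hx0), permFun_sq (by rintro rfl; simp at hy0),
      neg_inj] at hxy
    exact sq_eq_sq_of_sq_cube_add_self_eq hF hxy
  · have hy : ¬IsSquare y := by
      rwa [← quadraticChar_neg_one_iff_not_isSquare, ← hχ, quadraticChar_neg_one_iff_not_isSquare]
    rw [permFun_of_not_isSquare ringChar_ne_two_of_charP_three hx,
      permFun_of_not_isSquare ringChar_ne_two_of_charP_three hy] at hxy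
    exact eq_of_sq_eq_of_quadraticChar_eq hF hx0 hxy hχ

theorem permFun_bijective : Bijective (permFun F) :=
  Finite.injective_iff_bijective.mp (permFun_injective hF)

end FiniteField

theorem stmt_12_general {F : Type*} [Field F] [Fintype F] (n : ℕ) (hn : Odd n)
    (hcard : Fintype.card F = 3 ^ n) :
    Function.Bijective (fun x : F =>
      x ^ ((3 ^ n - 1) / 2 + 3) + x ^ ((3 ^ n - 1) / 2 + 1) + x ^ 3 + x ^ 2 + x) := by
  classical
  have hmod : 3 ^ n % 4 = 3 := by
    obtain ⟨m, rfl⟩ := hn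
    rw [pow_succ, pow_mul, Nat.mul_mod, Nat.pow_mod]
    norm_num
  have : CharP F 3 := charP_of_card_eq_prime_pow hcard
  have hneg : ¬IsSquare (-1 : F) := by
    rw [FiniteField.isSquare_neg_one_iff, hcard]
    omega
  have hexp : (3 ^ n - 1) / 2 = Fintype.card F / 2 := by
    rw [hcard]
    omega
  rw [hexp]
  exact FiniteField.permFun_bijective hneg

theorem stmt_12 {F : Type*} [Field F] [Fintype F] (n : ℕ) (hn : Odd n) (hn0 : 0 < n)
    (hcard : Fintype.card F = 3 ^ n) :
    Function.Bijective (fun x : F =>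
      x ^ ((3 ^ n - 1) / 2 + 3) + x ^ ((3 ^ n - 1) / 2 + 1) + x ^ 3 + x ^ 2 + x) :=
  stmt_12_general n hn hcard
end

section
/- Let q = 3^n and θ ∈ F_q* with η(θ) = -1. Then for x, y in the set C_0 of nonzero squares of F_q, x(x-θ)^2 = y(y-θ)^2 implies x = y. -/
/-!
In characteristic 3 the difference `x (x - θ)² - y (y - θ)²` factors as
`(x - y) ((x - y)² + θ (x + y) + θ²)`, and for `x = a²`, `y = b²` the second factor is
`(θ - (a + b)²) (θ - (a - b)²)`. So if `θ` is a nonsquare, the second factor cannot vanish.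
-/

section CharThree

variable {R : Type*} [CommRing R] [CharP R 3]

theorem mul_sub_sq_sub_mul_sub_sq_of_charP_three (θ x y : R) :
    x * (x - θ) ^ 2 - y * (y - θ) ^ 2 = (x - y) * ((x - y) ^ 2 + θ * (x + y) + θ ^ 2) := by
  have h3 : (3 : R) = 0 := CharP.cast_eq_zero R 3
  linear_combination (x ^ 2 * y - x * y ^ 2 - θ * x ^ 2 + θ * y ^ 2) * h3

theorem sq_sub_sq_sq_add_mul_add_sq_of_charP_three (θ a b : R) :
    (a ^ 2 - b ^ 2) ^ 2 + θ * (a ^ 2 + b ^ 2) + θ ^ 2 = (θ - (a + b) ^ 2) * (θ - (a - b) ^ 2) := by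
  have h3 : (3 : R) = 0 := CharP.cast_eq_zero R 3
  linear_combination θ * (a ^ 2 + b ^ 2) * h3

end CharThree

theorem injOn_mul_sub_sq_of_charP_three {F : Type*} [Field F] [CharP F 3] {θ : F}
    (hθ : ¬IsSquare θ) : Set.InjOn (fun x ↦ x * (x - θ) ^ 2) {x | IsSquare x} := by
  rintro x ⟨a, rfl⟩ y ⟨b, rfl⟩ heq
  by_contra hne
  have hfactor := mul_sub_sq_sub_mul_sub_sq_of_charP_three θ (a * a) (b * b)
  rw [sub_eq_zero.mpr heq, eq_comm, mul_eq_zero, sub_eq_zero, or_iff_right hne] at hfactor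
  rw [← sq, ← sq, sq_sub_sq_sq_add_mul_add_sq_of_charP_three, mul_eq_zero, sub_eq_zero,
    sub_eq_zero] at hfactor
  rcases hfactor with h | h <;> exact hθ ⟨_, h.trans (sq _)⟩

theorem stmt_15_general {F : Type*} [Field F] [Fintype F] (n : ℕ)
    (hcard : Fintype.card F = 3 ^ n)
    (θ : F) (hθns : ¬ IsSquare θ) :
    ∀ x y : F, x ≠ 0 → y ≠ 0 → IsSquare x → IsSquare y →
      x * (x - θ) ^ 2 = y * (y - θ) ^ 2 → x = y := by
  have : Fact (Nat.Prime 3) := ⟨Nat.prime_three⟩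
  have : CharP F 3 := charP_of_card_eq_prime_pow hcard
  intro x y _ _ hx hy heq
  exact injOn_mul_sub_sq_of_charP_three hθns hx hy heq

theorem stmt_15 {F : Type*} [Field F] [Fintype F] (n : ℕ) (hn : 0 < n)
    (hcard : Fintype.card F = 3 ^ n)
    (θ : F) (hθ : θ ≠ 0) (hθns : ¬ IsSquare θ) :
    ∀ x y : F, x ≠ 0 → y ≠ 0 → IsSquare x → IsSquare y →
      x * (x - θ) ^ 2 = y * (y - θ) ^ 2 → x = y :=
  stmt_15_general n hcard θ hθns
end
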